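/- arXiv:1708.08440 — 6 statements merged into one kernel-verified Lean document; each statement's English description precedes it below -/
import Mathlib

section
/- For every c > 0, x > 0 and t > 0, with λ := c²/2 and h(x) := x e^{c x}/√(2π λ²), the survival-probability integral F(x,t) := ∫_t^∞ x (2π s³)^{−1/2} exp(c x − λ s − x²/(2s)) ds satisfies the two-sided bound e^{−x²/(2t)} (1 − 3/(2λ t)) · h(x) t^{−3/2} e^{−λ t} ≤ F(x,t) ≤ h(x) t^{−3/2} e^{−λ t}. (In particular F(x,t) = h(x) t^{−3/2} e^{−λ t}(1+ε(x,t)) with e^{−x²/(2t)}(1−3/(2λt)) ≤ 1+ε(x,t) ≤ 1.) -/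
/-!
Factor the integrand as `x e^{cx} / √(2π)` times `e^{-x²/(2s)} · s^{-3/2} e^{-λs}`. On `s > t`
the Gaussian factor lies between `e^{-x²/(2t)}` and `1`, so everything reduces to two-sided
bounds on the incomplete gamma integral `∫_t^∞ s^r e^{-λs} ds` for `r ≤ 0`. The upper bound
`t^r e^{-λt}/λ` comes from `s^r ≤ t^r`. The lower bound `t^r e^{-λt}/λ · (1 + r/(λt))` is the
two-term asymptotic expansion: as a function of `t` its derivative is
`-(t^r - r(r-1)λ⁻² t^{r-2}) e^{-λt}`, whose correction term has a sign since `r(r-1) ≥ 0`.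
-/

open Real MeasureTheory

section

open Set Filter Topology

variable {l t r : ℝ}

lemma integrableOn_Ioi_rpow_mul_exp_neg_mul (hl : 0 < l) (ht : 0 < t) (hr : r ≤ 0) :
    IntegrableOn (fun s => s ^ r * exp (-l * s)) (Ioi t) := by
  refine (exp_neg_integrableOn_Ioi t hl).bdd_mul (c := t ^ r) ?_ ?_
  · exact (continuousOn_id.rpow_const fun s hs => Or.inl (ht.trans hs).ne').aestronglyMeasurable
      measurableSet_Ioi
  · filter_upwards [ae_restrict_mem measurableSet_Ioi] with s hs
    rw [norm_of_nonneg (rpow_nonneg (ht.trans hs).le _)]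
    exact rpow_le_rpow_of_nonpos ht hs.le hr

lemma integral_Ioi_rpow_mul_exp_neg_mul_le (hl : 0 < l) (ht : 0 < t) (hr : r ≤ 0) :
    ∫ s in Ioi t, s ^ r * exp (-l * s) ≤ t ^ r * exp (-l * t) / l :=
  calc ∫ s in Ioi t, s ^ r * exp (-l * s) ≤ ∫ s in Ioi t, t ^ r * exp (-l * s) :=
        setIntegral_mono_on (integrableOn_Ioi_rpow_mul_exp_neg_mul hl ht hr)
          ((exp_neg_integrableOn_Ioi t hl).const_mul _) measurableSet_Ioi fun s hs =>
            mul_le_mul_of_nonneg_right (rpow_le_rpow_of_nonpos ht (le_of_lt hs) hr) (exp_pos _).le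
    _ = t ^ r * exp (-l * t) / l := by
        rw [integral_const_mul, integral_exp_mul_Ioi (neg_lt_zero.2 hl)]
        field_simp

lemma hasDerivAt_rpow_mul_exp_neg_mul_expansion (hl : l ≠ 0) {s : ℝ} (hs : 0 < s) :
    HasDerivAt
      (fun u => -(u ^ r * exp (-l * u) / l + r / l ^ 2 * (u ^ (r - 1) * exp (-l * u))))
      ((s ^ r - r * (r - 1) / l ^ 2 * s ^ (r - 2)) * exp (-l * s)) s := by
  have hexp : HasDerivAt (fun u => exp (-l * u)) (exp (-l * s) * -l) s := by
    simpa using ((hasDerivAt_id s).const_mul (-l)).exp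
  have h₀ := (hasDerivAt_rpow_const (p := r) (Or.inl hs.ne')).mul hexp
  have h₁ := (hasDerivAt_rpow_const (p := r - 1) (Or.inl hs.ne')).mul hexp
  refine ((h₀.div_const l).add (h₁.const_mul (r / l ^ 2))).neg.congr_deriv ?_
  rw [show r - 2 = r - 1 - 1 by ring, rpow_sub_one hs.ne', rpow_sub_one hs.ne']
  field_simp
  ring

lemma le_integral_Ioi_rpow_mul_exp_neg_mul (hl : 0 < l) (ht : 0 < t) (hr : r ≤ 0) :
    t ^ r * exp (-l * t) / l * (1 + r / (l * t)) ≤ ∫ s in Ioi t, s ^ r * exp (-l * s) := by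
  have hint : IntegrableOn (fun s => (s ^ r - r * (r - 1) / l ^ 2 * s ^ (r - 2)) * exp (-l * s))
      (Ioi t) := by
    simp_rw [sub_mul, mul_assoc]
    exact (integrableOn_Ioi_rpow_mul_exp_neg_mul hl ht hr).sub
      ((integrableOn_Ioi_rpow_mul_exp_neg_mul hl ht (by linarith)).const_mul _)
  have hlim : Tendsto
      (fun u => -(u ^ r * exp (-l * u) / l + r / l ^ 2 * (u ^ (r - 1) * exp (-l * u))))
      atTop (𝓝 0) := by
    simpa using (((tendsto_rpow_mul_exp_neg_mul_atTop_nhds_zero r l hl).div_const l).add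
      ((tendsto_rpow_mul_exp_neg_mul_atTop_nhds_zero (r - 1) l hl).const_mul (r / l ^ 2))).neg
  have hftc := integral_Ioi_of_hasDerivAt_of_tendsto
    (hasDerivAt_rpow_mul_exp_neg_mul_expansion hl.ne' ht).continuousAt.continuousWithinAt
    (fun s hs => hasDerivAt_rpow_mul_exp_neg_mul_expansion hl.ne' (ht.trans hs)) hint hlim
  calc t ^ r * exp (-l * t) / l * (1 + r / (l * t))
      = ∫ s in Ioi t, (s ^ r - r * (r - 1) / l ^ 2 * s ^ (r - 2)) * exp (-l * s) := by
        rw [hftc, rpow_sub_one ht.ne']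
        field_simp
        ring
    _ ≤ ∫ s in Ioi t, s ^ r * exp (-l * s) := by
        refine setIntegral_mono_on hint (integrableOn_Ioi_rpow_mul_exp_neg_mul hl ht hr)
          measurableSet_Ioi fun s hs => ?_
        have hrr : 0 ≤ r * (r - 1) := mul_nonneg_of_nonpos_of_nonpos hr (by linarith)
        have hs : 0 < s := ht.trans hs
        gcongr
        exact sub_le_self _ (by positivity)

lemma setIntegral_mul_mem_Icc_of_mem_Icc {α : Type*} [MeasurableSpace α] {μ : Measure α}
    {S : Set α} {w g : α → ℝ} {m M : ℝ} (hS : MeasurableSet S) (hg : IntegrableOn g S μ)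
    (hg₀ : ∀ a ∈ S, 0 ≤ g a) (hw : AEStronglyMeasurable w (μ.restrict S))
    (hwS : ∀ a ∈ S, w a ∈ Icc m M) :
    ∫ a in S, w a * g a ∂μ ∈ Icc (m * ∫ a in S, g a ∂μ) (M * ∫ a in S, g a ∂μ) := by
  have hwg : IntegrableOn (fun a => w a * g a) S μ := by
    refine hg.bdd_mul hw (c := max |m| |M|) ?_
    filter_upwards [ae_restrict_mem hS] with a ha
    exact abs_le_max_abs_abs (hwS a ha).1 (hwS a ha).2
  rw [← integral_const_mul, ← integral_const_mul]
  exact ⟨setIntegral_mono_on (hg.const_mul m) hwg hS fun a ha =>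
      mul_le_mul_of_nonneg_right (hwS a ha).1 (hg₀ a ha),
    setIntegral_mono_on hwg (hg.const_mul M) hS fun a ha =>
      mul_le_mul_of_nonneg_right (hwS a ha).2 (hg₀ a ha)⟩

lemma exp_neg_sq_div_mem_Icc (x : ℝ) {s : ℝ} (ht : 0 < t) (hts : t ≤ s) :
    exp (-x ^ 2 / (2 * s)) ∈ Icc (exp (-x ^ 2 / (2 * t))) 1 := by
  refine ⟨exp_le_exp.2 ?_, exp_le_one_iff.2 ?_⟩
  · rw [neg_div, neg_div, neg_le_neg_iff]
    gcongr
  · have hs : 0 < s := ht.trans_le hts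
    rw [neg_div, neg_nonpos]
    positivity

lemma sqrt_two_pi_mul_pow_three {s : ℝ} (hs : 0 ≤ s) :
    √(2 * π * s ^ 3) = √(2 * π) * s ^ (3 / 2 : ℝ) := by
  rw [sqrt_mul (by positivity), sqrt_eq_rpow (s ^ 3), ← rpow_natCast, ← rpow_mul hs]
  norm_num

lemma inverseGaussian_density_eq (c x : ℝ) {s : ℝ} (hs : 0 < s) :
    x * (√(2 * π * s ^ 3))⁻¹ * exp (c * x - l * s - x ^ 2 / (2 * s)) =
      x * exp (c * x) / √(2 * π) *
        (exp (-x ^ 2 / (2 * s)) * (s ^ (-(3 / 2 : ℝ)) * exp (-l * s))) := by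
  rw [sqrt_two_pi_mul_pow_three hs.le, rpow_neg hs.le, sub_sub, sub_eq_add_neg, exp_add,
    neg_add, exp_add]
  ring_nf

end

theorem survival_probability_two_sided_bound
    (c : ℝ) (hc : 0 < c) (x t : ℝ) (hx : 0 < x) (ht : 0 < t) :
    (Real.exp (-x ^ 2 / (2 * t)) * (1 - 3 / (2 * (c ^ 2 / 2) * t)) *
        (x * Real.exp (c * x) / Real.sqrt (2 * π * (c ^ 2 / 2) ^ 2)) *
        t ^ (-(3 / 2 : ℝ)) * Real.exp (-(c ^ 2 / 2) * t)
      ≤ ∫ s in Set.Ioi t,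
          x * (Real.sqrt (2 * π * s ^ 3))⁻¹ *
            Real.exp (c * x - c ^ 2 / 2 * s - x ^ 2 / (2 * s))) ∧
    (∫ s in Set.Ioi t,
        x * (Real.sqrt (2 * π * s ^ 3))⁻¹ *
          Real.exp (c * x - c ^ 2 / 2 * s - x ^ 2 / (2 * s)))
      ≤ (x * Real.exp (c * x) / Real.sqrt (2 * π * (c ^ 2 / 2) ^ 2)) *
          t ^ (-(3 / 2 : ℝ)) * Real.exp (-(c ^ 2 / 2) * t) := by
  set l := c ^ 2 / 2
  have hl : 0 < l := by positivity
  have hr : -(3 / 2 : ℝ) ≤ 0 := by norm_num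
  set K := x * exp (c * x) / √(2 * π)
  have hh : x * exp (c * x) / √(2 * π * l ^ 2) = K / l := by
    rw [sqrt_mul (by positivity), sqrt_sq hl.le, div_mul_eq_div_div]
  have hF : ∫ s in Set.Ioi t, x * (√(2 * π * s ^ 3))⁻¹ *
        exp (c * x - l * s - x ^ 2 / (2 * s)) =
      K * ∫ s in Set.Ioi t, exp (-x ^ 2 / (2 * s)) * (s ^ (-(3 / 2 : ℝ)) * exp (-l * s)) := by
    rw [← integral_const_mul]
    exact setIntegral_congr_fun measurableSet_Ioi fun s hs =>
      inverseGaussian_density_eq c x (ht.trans hs)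
  obtain ⟨hlow, hup⟩ := setIntegral_mul_mem_Icc_of_mem_Icc measurableSet_Ioi
    (integrableOn_Ioi_rpow_mul_exp_neg_mul hl ht hr)
    (fun s hs => by have := ht.trans hs; positivity)
    (by fun_prop : Measurable fun s : ℝ => exp (-x ^ 2 / (2 * s))).aestronglyMeasurable
    (fun s hs => exp_neg_sq_div_mem_Icc x ht (le_of_lt hs))
  have hγlow := le_integral_Ioi_rpow_mul_exp_neg_mul hl ht hr
  have hγup := integral_Ioi_rpow_mul_exp_neg_mul_le hl ht hr
  rw [hF, hh]
  constructor
  · calc exp (-x ^ 2 / (2 * t)) * (1 - 3 / (2 * l * t)) * (K / l) * t ^ (-(3 / 2 : ℝ)) *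
          exp (-l * t)
        = K * (exp (-x ^ 2 / (2 * t)) *
            (t ^ (-(3 / 2 : ℝ)) * exp (-l * t) / l * (1 + -(3 / 2 : ℝ) / (l * t)))) := by ring
      _ ≤ K * ∫ s in Set.Ioi t,
            exp (-x ^ 2 / (2 * s)) * (s ^ (-(3 / 2 : ℝ)) * exp (-l * s)) := by
        gcongr
        exact (mul_le_mul_of_nonneg_left hγlow (exp_pos _).le).trans hlow
  · calc K * ∫ s in Set.Ioi t,
            exp (-x ^ 2 / (2 * s)) * (s ^ (-(3 / 2 : ℝ)) * exp (-l * s))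
        ≤ K * (t ^ (-(3 / 2 : ℝ)) * exp (-l * t) / l) := by
          gcongr
          exact hup.trans (by linarith)
      _ = K / l * t ^ (-(3 / 2 : ℝ)) * exp (-l * t) := by ring
end

section
/- There exists a constant C > 0, depending only on c, such that for every x > 0, t > 0 and every Borel set B ⊆ (0,∞), writing ε_B(x,t) := (t^{3/2} e^{λ t} / h(x)) · ∫_B p_t(x,y) dy − ν(B), one has |ε_B(x,t)| ≤ min( C (x+1)² / t , 2 ). Equivalently, ∫_B p_t(x,y) dy = h(x) t^{−3/2} e^{−λ t} (ν(B) + ε_B(x,t)) with the stated bound on the error term. -/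
/-!
Put `u = x y / t` and `s = (x² + y²) / (2 t)`. The difference of the two Gaussians in `p_t(x, y)`
is `2 e^{-s} sinh u`, so `t^{3/2} e^{λ t} p_t(x, y) / h(x)` is the density `2 λ y e^{-c y}` of `ν`
multiplied by `e^{-s} sinh u / u`. As `u ≤ s` and `u ≤ sinh u ≤ u e^u`, this factor lies in
`[1 - s, 1]`. Hence the rescaled measure of `B` lies between `0` and `ν(B) ≤ 1`, which gives the
bound `2`, and it differs from `ν(B)` by at most `∫ s dν ≤ (x + 1)² / t · ∫ (1 + y²) dν(y)`, where
`∫ (1 + y²) dν(y) = 1 + 6 / c²`.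
-/

open Real MeasureTheory Set
open scoped Nat

lemma sinh_le_mul_exp (u : ℝ) : sinh u ≤ u * exp u := by
  have h : exp (-u) = exp u * exp (-(2 * u)) := by rw [← exp_add]; ring_nf
  have := add_one_le_exp (-(2 * u))
  rw [sinh_eq, h]
  nlinarith [exp_pos u]

lemma exp_neg_mul_sinh_le {u s : ℝ} (hu : 0 ≤ u) (hus : u ≤ s) : exp (-s) * sinh u ≤ u :=
  calc exp (-s) * sinh u ≤ exp (-s) * (u * exp u) := by gcongr; exact sinh_le_mul_exp u
    _ = u * exp (u - s) := by rw [sub_eq_add_neg, exp_add]; ring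
    _ ≤ u * 1 := by gcongr; exact exp_le_one_iff.mpr (by linarith)
    _ = u := mul_one u

lemma mul_one_sub_le_exp_neg_mul_sinh {u : ℝ} (s : ℝ) (hu : 0 ≤ u) :
    u * (1 - s) ≤ exp (-s) * sinh u :=
  calc u * (1 - s) ≤ u * exp (-s) := by gcongr; linarith [add_one_le_exp (-s)]
    _ ≤ sinh u * exp (-s) := by gcongr; exact self_le_sinh_iff.mpr hu
    _ = exp (-s) * sinh u := mul_comm _ _

lemma exp_neg_sq_sub_exp_neg_sq (x y : ℝ) {t : ℝ} (ht : t ≠ 0) :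
    exp (-(x - y) ^ 2 / (2 * t)) - exp (-(x + y) ^ 2 / (2 * t))
      = 2 * (exp (-((x ^ 2 + y ^ 2) / (2 * t))) * sinh (x * y / t)) := by
  have hminus : -(x - y) ^ 2 / (2 * t) = -((x ^ 2 + y ^ 2) / (2 * t)) + x * y / t := by
    field_simp; ring
  have hplus : -(x + y) ^ 2 / (2 * t) = -((x ^ 2 + y ^ 2) / (2 * t)) + -(x * y / t) := by
    field_simp; ring
  rw [hminus, hplus, exp_add, exp_add, sinh_eq]
  ring

lemma integral_pow_mul_exp_neg_mul_Ioi (n : ℕ) {r : ℝ} (hr : 0 < r) :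
    ∫ y in Ioi (0 : ℝ), y ^ n * exp (-(r * y)) = n ! / r ^ (n + 1) := by
  have h := integral_rpow_mul_exp_neg_mul_Ioi (a := n + 1) (by positivity) hr
  simp only [add_sub_cancel_right, rpow_natCast, Gamma_nat_eq_factorial] at h
  rw [h, one_div, inv_rpow hr.le, ← Nat.cast_add_one, rpow_natCast, div_eq_inv_mul]

lemma integrableOn_pow_mul_exp_neg_mul_Ioi (n : ℕ) {r : ℝ} (hr : 0 < r) :
    IntegrableOn (fun y : ℝ => y ^ n * exp (-(r * y))) (Ioi 0) :=
  .of_integral_ne_zero (by rw [integral_pow_mul_exp_neg_mul_Ioi n hr]; positivity)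

lemma abs_setIntegral_sub_le_min {α : Type*} [MeasurableSpace α] {μ : Measure α} {s : Set α}
    {f g k : α → ℝ} (hs : MeasurableSet s) (hf : AEStronglyMeasurable f (μ.restrict s))
    (hg : IntegrableOn g s μ) (hk : IntegrableOn k s μ) (hf0 : ∀ a ∈ s, 0 ≤ f a)
    (hfg : ∀ a ∈ s, f a ≤ g a) (hgfk : ∀ a ∈ s, g a - f a ≤ k a) :
    |∫ a in s, f a ∂μ - ∫ a in s, g a ∂μ| ≤ min (∫ a in s, k a ∂μ) (∫ a in s, g a ∂μ) := by
  have hfi : IntegrableOn f s μ := by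
    refine hg.mono' hf (ae_restrict_of_forall_mem hs fun a ha => ?_)
    rw [norm_of_nonneg (hf0 a ha)]
    exact hfg a ha
  have hf_nonneg : 0 ≤ ∫ a in s, f a ∂μ := setIntegral_nonneg hs hf0
  have hf_le : ∫ a in s, f a ∂μ ≤ ∫ a in s, g a ∂μ := setIntegral_mono_on hfi hg hs hfg
  have hgf_le : ∫ a in s, g a ∂μ - ∫ a in s, f a ∂μ ≤ ∫ a in s, k a ∂μ := by
    rw [← integral_sub hg hfi]
    exact setIntegral_mono_on (hg.sub hfi) hk hs hgfk
  rw [abs_sub_comm, abs_of_nonneg (sub_nonneg.mpr hf_le)]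
  exact le_min hgf_le (by linarith)

noncomputable def killedTransitionDensity (c t x y : ℝ) : ℝ :=
  exp (-(c * (y - x)) - c ^ 2 / 2 * t) * (sqrt (2 * π * t))⁻¹ *
    (exp (-(x - y) ^ 2 / (2 * t)) - exp (-(x + y) ^ 2 / (2 * t)))

noncomputable def harmonicFn (c x : ℝ) : ℝ :=
  x * exp (c * x) / sqrt (2 * π * (c ^ 2 / 2) ^ 2)

noncomputable def nuDensity (c y : ℝ) : ℝ :=
  2 * (c ^ 2 / 2) * y * exp (-(c * y))

noncomputable def rescaledDensity (c t x y : ℝ) : ℝ :=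
  c ^ 2 * t / x * exp (-(c * y)) * (exp (-((x ^ 2 + y ^ 2) / (2 * t))) * sinh (x * y / t))

lemma mul_killedTransitionDensity_eq_rescaledDensity (c : ℝ) {t x : ℝ} (ht : 0 < t) (hx : x ≠ 0) (y : ℝ) :
    t ^ (3 / 2 : ℝ) * exp (c ^ 2 / 2 * t) / harmonicFn c x * killedTransitionDensity c t x y
      = rescaledDensity c t x y := by
  have hsqrt_c : sqrt (2 * π * (c ^ 2 / 2) ^ 2) = sqrt (2 * π) * (c ^ 2 / 2) := by
    rw [sqrt_mul (by positivity), sqrt_sq (by positivity)]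
  have hsqrt_t : sqrt (2 * π * t) = sqrt (2 * π) * sqrt t := sqrt_mul (by positivity) t
  have hpow : t ^ (3 / 2 : ℝ) = t * sqrt t := by
    rw [show (3 / 2 : ℝ) = 1 + 1 / 2 by norm_num, rpow_add ht, rpow_one, ← sqrt_eq_rpow]
  have hexp : exp (-(c * (y - x)) - c ^ 2 / 2 * t)
      = exp (-(c * y)) * exp (c * x) / exp (c ^ 2 / 2 * t) := by
    rw [← exp_add, ← exp_sub]; ring_nf
  have : sqrt t ≠ 0 := (sqrt_pos.mpr ht).ne'
  have : sqrt (2 * π) ≠ 0 := (sqrt_pos.mpr (by positivity)).ne'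
  unfold harmonicFn killedTransitionDensity rescaledDensity
  rw [hsqrt_c, hsqrt_t, hpow, hexp, exp_neg_sq_sub_exp_neg_sq x y ht.ne']
  field_simp

lemma nuDensity_eq (c y : ℝ) {t x : ℝ} (ht : t ≠ 0) (hx : x ≠ 0) :
    nuDensity c y = c ^ 2 * t / x * exp (-(c * y)) * (x * y / t) := by
  unfold nuDensity
  field_simp

section Pointwise

variable {c t x y : ℝ}

lemma rescaledDensity_nonneg (ht : 0 < t) (hx : 0 < x) (hy : 0 ≤ y) :
    0 ≤ rescaledDensity c t x y := by
  have : 0 ≤ sinh (x * y / t) := sinh_nonneg_iff.mpr (by positivity)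
  unfold rescaledDensity
  positivity

lemma rescaledDensity_le_nuDensity (ht : 0 < t) (hx : 0 < x) (hy : 0 ≤ y) :
    rescaledDensity c t x y ≤ nuDensity c y := by
  have hus : x * y / t ≤ (x ^ 2 + y ^ 2) / (2 * t) := by
    rw [div_le_div_iff₀ ht (by positivity)]
    nlinarith [sq_nonneg (x - y)]
  rw [nuDensity_eq c y ht.ne' hx.ne']
  unfold rescaledDensity
  gcongr
  exact exp_neg_mul_sinh_le (by positivity) hus

lemma nuDensity_sub_rescaledDensity_le (ht : 0 < t) (hx : 0 < x) (hy : 0 ≤ y) :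
    nuDensity c y - rescaledDensity c t x y ≤ (x + 1) ^ 2 / t * (nuDensity c y * (1 + y ^ 2)) := by
  set s := (x ^ 2 + y ^ 2) / (2 * t)
  have hs : s ≤ (x + 1) ^ 2 / t * (1 + y ^ 2) := by
    rw [div_mul_eq_mul_div, div_le_div_iff₀ (by positivity) ht]
    nlinarith [mul_nonneg (mul_nonneg hx.le hx.le) (sq_nonneg y), mul_nonneg hx.le (sq_nonneg y)]
  have hlower : nuDensity c y * (1 - s) ≤ rescaledDensity c t x y := by
    rw [nuDensity_eq c y ht.ne' hx.ne', mul_assoc]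
    exact mul_le_mul_of_nonneg_left (mul_one_sub_le_exp_neg_mul_sinh s (by positivity))
      (by positivity)
  have hnu : 0 ≤ nuDensity c y := by unfold nuDensity; positivity
  calc nuDensity c y - rescaledDensity c t x y ≤ nuDensity c y * s := by linarith
    _ ≤ nuDensity c y * ((x + 1) ^ 2 / t * (1 + y ^ 2)) := by gcongr
    _ = (x + 1) ^ 2 / t * (nuDensity c y * (1 + y ^ 2)) := by ring

end Pointwise

section Moments

variable {c : ℝ}

lemma nuDensity_eq_pow_mul_exp (c : ℝ) :
    nuDensity c = fun y => c ^ 2 * (y ^ 1 * exp (-(c * y))) := by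
  ext y; unfold nuDensity; ring

lemma nuDensity_mul_one_add_sq (c : ℝ) :
    (fun y => nuDensity c y * (1 + y ^ 2))
      = fun y => c ^ 2 * (y ^ 1 * exp (-(c * y))) + c ^ 2 * (y ^ 3 * exp (-(c * y))) := by
  ext y; unfold nuDensity; ring

lemma integrableOn_nuDensity (hc : 0 < c) : IntegrableOn (nuDensity c) (Ioi 0) := by
  rw [nuDensity_eq_pow_mul_exp]
  exact (integrableOn_pow_mul_exp_neg_mul_Ioi 1 hc).const_mul (c ^ 2)

lemma integral_nuDensity (hc : 0 < c) : ∫ y in Ioi 0, nuDensity c y = 1 := by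
  rw [nuDensity_eq_pow_mul_exp, integral_const_mul, integral_pow_mul_exp_neg_mul_Ioi 1 hc]
  field_simp
  norm_num

lemma integrableOn_nuDensity_mul_one_add_sq (hc : 0 < c) :
    IntegrableOn (fun y => nuDensity c y * (1 + y ^ 2)) (Ioi 0) := by
  rw [nuDensity_mul_one_add_sq]
  exact ((integrableOn_pow_mul_exp_neg_mul_Ioi 1 hc).const_mul (c ^ 2)).add
      ((integrableOn_pow_mul_exp_neg_mul_Ioi 3 hc).const_mul (c ^ 2))

lemma integral_nuDensity_mul_one_add_sq (hc : 0 < c) :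
    ∫ y in Ioi 0, nuDensity c y * (1 + y ^ 2) = 1 + 6 / c ^ 2 := by
  rw [nuDensity_mul_one_add_sq, integral_add ((integrableOn_pow_mul_exp_neg_mul_Ioi 1 hc).const_mul _)
      ((integrableOn_pow_mul_exp_neg_mul_Ioi 3 hc).const_mul _),
    integral_const_mul, integral_const_mul, integral_pow_mul_exp_neg_mul_Ioi 1 hc,
    integral_pow_mul_exp_neg_mul_Ioi 3 hc]
  field_simp
  norm_num [Nat.factorial]
  ring

end Moments

theorem error_term_bound_transition_density
    (c : ℝ) (hc : 0 < c) :
    ∃ C : ℝ, 0 < C ∧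
      ∀ (x t : ℝ), 0 < x → 0 < t →
        ∀ B : Set ℝ, MeasurableSet B → B ⊆ Set.Ioi (0 : ℝ) →
          |(t ^ (3 / 2 : ℝ) * Real.exp (c ^ 2 / 2 * t) /
                (x * Real.exp (c * x) / Real.sqrt (2 * π * (c ^ 2 / 2) ^ 2))) *
              (∫ y in B,
                Real.exp (-(c * (y - x)) - c ^ 2 / 2 * t) * (Real.sqrt (2 * π * t))⁻¹ *
                  (Real.exp (-(x - y) ^ 2 / (2 * t)) - Real.exp (-(x + y) ^ 2 / (2 * t))))
            - ∫ y in B, 2 * (c ^ 2 / 2) * y * Real.exp (-(c * y))|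
          ≤ min (C * (x + 1) ^ 2 / t) 2 := by
  refine ⟨1 + 6 / c ^ 2, by positivity, fun x t hx ht B hB hBpos => ?_⟩
  have hy : ∀ y ∈ B, 0 ≤ y := fun y hy => (hBpos hy).le
  change |t ^ (3 / 2 : ℝ) * exp (c ^ 2 / 2 * t) / harmonicFn c x *
      (∫ y in B, killedTransitionDensity c t x y) - ∫ y in B, nuDensity c y| ≤ _
  rw [← integral_const_mul]
  simp_rw [mul_killedTransitionDensity_eq_rescaledDensity c ht hx.ne']
  have hmoment : IntegrableOn (fun y => (x + 1) ^ 2 / t * (nuDensity c y * (1 + y ^ 2))) (Ioi 0) :=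
    (integrableOn_nuDensity_mul_one_add_sq hc).const_mul _
  have hmeas : AEStronglyMeasurable (rescaledDensity c t x) (volume.restrict B) :=
    (by unfold rescaledDensity; fun_prop : Continuous (rescaledDensity c t x)).aestronglyMeasurable
  refine (abs_setIntegral_sub_le_min hB hmeas ((integrableOn_nuDensity hc).mono_set hBpos)
    (hmoment.mono_set hBpos)
    (fun y hyB => rescaledDensity_nonneg ht hx (hy y hyB))
    (fun y hyB => rescaledDensity_le_nuDensity ht hx (hy y hyB))
    (fun y hyB => nuDensity_sub_rescaledDensity_le ht hx (hy y hyB))).trans (min_le_min ?_ ?_)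
  · calc ∫ y in B, (x + 1) ^ 2 / t * (nuDensity c y * (1 + y ^ 2))
        ≤ ∫ y in Ioi 0, (x + 1) ^ 2 / t * (nuDensity c y * (1 + y ^ 2)) :=
          setIntegral_mono_set hmoment
            (ae_restrict_of_forall_mem measurableSet_Ioi fun y (hy : 0 < y) => by
              unfold nuDensity; positivity) hBpos.eventuallyLE
      _ = (1 + 6 / c ^ 2) * (x + 1) ^ 2 / t := by
          rw [integral_const_mul, integral_nuDensity_mul_one_add_sq hc]; ring
  · calc ∫ y in B, nuDensity c y ≤ ∫ y in Ioi 0, nuDensity c y :=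
          setIntegral_mono_set (integrableOn_nuDensity hc)
            (ae_restrict_of_forall_mem measurableSet_Ioi fun y (hy : 0 < y) => by
              unfold nuDensity; positivity) hBpos.eventuallyLE
      _ ≤ 2 := by rw [integral_nuDensity hc]; norm_num
end

section
/- For every c > 0 and x > 0, with λ := c²/2, one has lim_{t→∞} t^{3/2} e^{λ t} ∫_t^∞ x (2π s³)^{−1/2} exp(c x − λ s − x²/(2s)) ds = x e^{c x}/√(2π λ²). That is, t^{3/2} e^{λ t} F(x,t) → h(x) as t → ∞, where F(x,t) is the survival probability of drifted Brownian motion absorbed at 0. -/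
/-!
After the substitution `s = t + r`,
`t^{3/2} e^{λt} F(x,t) = ∫_0^∞ e^{-λr} K (t/(t+r))^{3/2} e^{-x²/(2(t+r))} dr`
with `K = x e^{cx}/√(2π)`. The last two factors lie in `[0, 1]` and tend to `1` as `t → ∞`,
so by dominated convergence the integral tends to `K ∫_0^∞ e^{-λr} dr = K/λ = h(x)`.
-/

open Real MeasureTheory Filter Set Topology

theorem setIntegral_Ioi_eq_setIntegral_Ioi_zero_add {E : Type*} [NormedAddCommGroup E]
    [NormedSpace ℝ E] (f : ℝ → E) (t : ℝ) :
    ∫ s in Ioi t, f s = ∫ r in Ioi 0, f (t + r) := by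
  simpa using ((measurePreserving_add_left volume t).setIntegral_preimage_emb
    (measurableEmbedding_addLeft t) f (Ioi t)).symm

theorem tendsto_integral_mul_of_tendsto_of_norm_le {α ι 𝕜 : Type*} [MeasurableSpace α]
    [RCLike 𝕜] {μ : Measure α} {l : Filter ι} [l.IsCountablyGenerated] {g : α → 𝕜}
    {F : ι → α → 𝕜} {L : 𝕜} {C : ℝ} (hg : Integrable g μ)
    (hF_meas : ∀ᶠ i in l, AEStronglyMeasurable (F i) μ)
    (hF_le : ∀ᶠ i in l, ∀ᵐ a ∂μ, ‖F i a‖ ≤ C)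
    (hF_lim : ∀ᵐ a ∂μ, Tendsto (fun i => F i a) l (𝓝 L)) :
    Tendsto (fun i => ∫ a, g a * F i a ∂μ) l (𝓝 ((∫ a, g a ∂μ) * L)) := by
  rw [← integral_mul_const]
  refine tendsto_integral_filter_of_dominated_convergence (fun a => ‖g a‖ * C)
    (hF_meas.mono fun i hi => hg.aestronglyMeasurable.mul hi) ?_ (hg.norm.mul_const C)
    (hF_lim.mono fun a ha => tendsto_const_nhds.mul ha)
  filter_upwards [hF_le] with i hi
  filter_upwards [hi] with a ha
  rw [norm_mul]
  exact mul_le_mul_of_nonneg_left ha (norm_nonneg _)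

theorem tendsto_div_add_atTop_nhds_one (r : ℝ) :
    Tendsto (fun t : ℝ => t / (t + r)) atTop (𝓝 1) := by
  have h : Tendsto (fun t : ℝ => 1 - r / (t + r)) atTop (𝓝 1) := by
    simpa using tendsto_const_nhds.sub
      (tendsto_const_nhds.div_atTop (tendsto_atTop_add_const_right _ r tendsto_id))
  refine h.congr' ?_
  filter_upwards [eventually_gt_atTop (-r)] with t ht
  field_simp [(by linarith : t + r ≠ 0)]
  ring

theorem tendsto_div_add_rpow_mul_exp_atTop (p r a : ℝ) :
    Tendsto (fun t : ℝ => (t / (t + r)) ^ p * exp (-(a / (2 * (t + r))))) atTop (𝓝 1) := by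
  have hpow := (tendsto_div_add_atTop_nhds_one r).rpow_const (p := p) (Or.inl one_ne_zero)
  have hexp : Tendsto (fun t : ℝ => exp (-(a / (2 * (t + r))))) atTop (𝓝 1) := by
    have h := tendsto_const_nhds (x := a).div_atTop
      ((tendsto_atTop_add_const_right _ r tendsto_id).const_mul_atTop two_pos)
    simpa [Function.comp_def] using (continuous_exp.tendsto 0).comp (by simpa using h.neg)
  simpa using hpow.mul hexp

theorem div_add_rpow_mul_exp_le_one {p t r a : ℝ} (hp : 0 ≤ p) (ht : 0 ≤ t) (hr : 0 ≤ r)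
    (ha : 0 ≤ a) : (t / (t + r)) ^ p * exp (-(a / (2 * (t + r)))) ≤ 1 := by
  have hpow : (t / (t + r)) ^ p ≤ 1 :=
    rpow_le_one (by positivity) (div_le_one_of_le₀ (by linarith) (by positivity)) hp
  have hexp : exp (-(a / (2 * (t + r)))) ≤ 1 :=
    exp_le_one_iff.mpr (neg_nonpos.mpr (by positivity))
  exact mul_le_one₀ hpow (by positivity) hexp

theorem sqrt_mul_pow_three {a s : ℝ} (ha : 0 ≤ a) (hs : 0 ≤ s) :
    √(a * s ^ 3) = √a * s ^ (3 / 2 : ℝ) := by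
  rw [sqrt_mul ha, sqrt_eq_rpow (s ^ 3), ← rpow_natCast, ← rpow_mul hs]
  norm_num

noncomputable def firstPassageDensity (c x s : ℝ) : ℝ :=
  x * (√(2 * π * s ^ 3))⁻¹ * exp (c * x - c ^ 2 / 2 * s - x ^ 2 / (2 * s))

theorem rpow_mul_exp_mul_firstPassageDensity_add {t r : ℝ} (ht : 0 < t) (hr : 0 ≤ r)
    (c x : ℝ) :
    t ^ (3 / 2 : ℝ) * exp (c ^ 2 / 2 * t) * firstPassageDensity c x (t + r)
      = exp (-(c ^ 2 / 2) * r) * (x * exp (c * x) / √(2 * π) *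
          ((t / (t + r)) ^ (3 / 2 : ℝ) * exp (-(x ^ 2 / (2 * (t + r)))))) := by
  have htr : 0 < t + r := by linarith
  have hexp : exp (c ^ 2 / 2 * t) * exp (c * x - c ^ 2 / 2 * (t + r) - x ^ 2 / (2 * (t + r)))
      = exp (-(c ^ 2 / 2) * r) * exp (c * x) * exp (-(x ^ 2 / (2 * (t + r)))) := by
    simp only [← exp_add]
    ring_nf
  calc _ = x * (√(2 * π))⁻¹ * (t ^ (3 / 2 : ℝ) / (t + r) ^ (3 / 2 : ℝ)) *
        (exp (c ^ 2 / 2 * t) *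
          exp (c * x - c ^ 2 / 2 * (t + r) - x ^ 2 / (2 * (t + r)))) := by
        rw [firstPassageDensity, sqrt_mul_pow_three (by positivity) htr.le]
        ring
    _ = _ := by
        rw [hexp, div_rpow ht.le htr.le]
        ring

theorem survival_probability_asymptotics
    (c x : ℝ) (hc : 0 < c) (hx : 0 < x) :
    Tendsto
      (fun t : ℝ =>
        t ^ (3 / 2 : ℝ) * Real.exp (c ^ 2 / 2 * t) *
          ∫ s in Set.Ioi t,
            x * (Real.sqrt (2 * π * s ^ 3))⁻¹ *
              Real.exp (c * x - c ^ 2 / 2 * s - x ^ 2 / (2 * s)))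
      atTop
      (nhds (x * Real.exp (c * x) / Real.sqrt (2 * π * (c ^ 2 / 2) ^ 2))) := by
  set K := x * exp (c * x) / √(2 * π)
  have hK : 0 ≤ K := by positivity
  have hb : 0 < c ^ 2 / 2 := by positivity
  have hrescale : (fun t : ℝ => ∫ r in Ioi 0, exp (-(c ^ 2 / 2) * r) *
      (K * ((t / (t + r)) ^ (3 / 2 : ℝ) * exp (-(x ^ 2 / (2 * (t + r)))))))
      =ᶠ[atTop] fun t => t ^ (3 / 2 : ℝ) * exp (c ^ 2 / 2 * t) *
        ∫ s in Ioi t, firstPassageDensity c x s := by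
    filter_upwards [eventually_gt_atTop 0] with t ht
    rw [setIntegral_Ioi_eq_setIntegral_Ioi_zero_add _ t, ← integral_const_mul]
    exact setIntegral_congr_fun measurableSet_Ioi fun r hr =>
      (rpow_mul_exp_mul_firstPassageDensity_add ht (mem_Ioi.mp hr).le c x).symm
  have hlimit : (∫ r in Ioi 0, exp (-(c ^ 2 / 2) * r)) * (K * 1)
      = x * exp (c * x) / √(2 * π * (c ^ 2 / 2) ^ 2) := by
    rw [integral_exp_mul_Ioi (by linarith), mul_zero, exp_zero, sqrt_mul (by positivity),
      sqrt_sq hb.le]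
    simp only [K]
    field_simp
  rw [← hlimit]
  refine (tendsto_integral_mul_of_tendsto_of_norm_le (C := K)
    (exp_neg_integrableOn_Ioi 0 hb) ?_ ?_ ?_).congr' hrescale
  · exact Eventually.of_forall fun t => by fun_prop
  · filter_upwards [eventually_gt_atTop 0] with t ht
    refine ae_restrict_of_forall_mem measurableSet_Ioi fun r (hr : 0 < r) => ?_
    rw [norm_of_nonneg (by positivity)]
    exact mul_le_of_le_one_right hK
      (div_add_rpow_mul_exp_le_one (by norm_num) ht.le hr.le (sq_nonneg x))
  · exact ae_restrict_of_forall_mem measurableSet_Ioi fun r _ =>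
      tendsto_const_nhds.mul (tendsto_div_add_rpow_mul_exp_atTop _ _ _)
end

section
/- For every c > 0, t > 0 and x > 0, with λ := c²/2 and h(y) := y e^{c y}/√(2π λ²), one has ∫_0^∞ p_t(x,y) h(y) dy = e^{−λ t} h(x). That is, h is a right eigenfunction of the absorbed drifted Brownian semigroup with eigenvalue e^{−λ t}. -/
/-!
The drift factor `e^{-c(y-x)}` of the kernel and the factor `e^{c y}` of `h` multiply to the
constant `e^{c x}`, so the claim reduces to `∫₀^∞ q_t(x,y) y dy = x` for the heat kernel
`q_t(x,y) = φ_t(y - x) - φ_t(y + x)` killed at `0`, where `φ_t` is the centred Gaussian density of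
variance `t`. By the reflection `y ↦ -y` the left side is the integral of `y φ_t(y - x)` over the
whole line, i.e. the mean `x` of a Gaussian centred at `x`.
-/

open Real MeasureTheory ProbabilityTheory Set
open scoped NNReal

namespace ProbabilityTheory

variable {v : ℝ≥0}

lemma integrable_mul_gaussianPDFReal (μ : ℝ) (hv : v ≠ 0) :
    Integrable fun y ↦ y * gaussianPDFReal μ v y := by
  have h := (memLp_id_gaussianReal (μ := μ) (v := v) 1).integrable le_rfl
  rw [gaussianReal_of_var_ne_zero _ hv, integrable_withDensity_iff_integrable_smul'
    (measurable_gaussianPDF _ _) (ae_of_all _ fun _ ↦ gaussianPDF_lt_top)] at h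
  simpa [toReal_gaussianPDF, mul_comm] using h

lemma integral_mul_gaussianPDFReal (μ : ℝ) (hv : v ≠ 0) :
    ∫ y, y * gaussianPDFReal μ v y = μ := by
  simpa [integral_gaussianReal_eq_integral_smul hv, mul_comm] using
    integral_id_gaussianReal (μ := μ) (v := v)

lemma gaussianPDFReal_neg (μ : ℝ) (v : ℝ≥0) (y : ℝ) :
    gaussianPDFReal (-μ) v y = gaussianPDFReal μ v (-y) := by
  simp only [gaussianPDFReal, sub_neg_eq_add, ← neg_add', neg_sq]

lemma integral_Ioi_mul_sub_gaussianPDFReal_neg (x : ℝ) (hv : v ≠ 0) :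
    ∫ y in Ioi 0, y * (gaussianPDFReal x v y - gaussianPDFReal (-x) v y) = x := by
  set g : ℝ → ℝ := fun y ↦ y * gaussianPDFReal x v y
  have hg : Integrable g := integrable_mul_gaussianPDFReal x hv
  have h_odd : ∀ y, y * (gaussianPDFReal x v y - gaussianPDFReal (-x) v y) = g y + g (-y) := by
    intro y
    simp only [g, gaussianPDFReal_neg]
    ring
  simp_rw [h_odd]
  rw [integral_add hg.integrableOn hg.comp_neg.integrableOn, integral_comp_neg_Ioi, neg_zero,
    add_comm, intervalIntegral.integral_Iic_add_Ioi hg.integrableOn hg.integrableOn]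
  exact integral_mul_gaussianPDFReal x hv

end ProbabilityTheory

theorem h_is_right_eigenfunction_general
    (c t x : ℝ) (ht : 0 < t) :
    (∫ y in Set.Ioi (0 : ℝ),
        (Real.exp (-(c * (y - x)) - c ^ 2 / 2 * t) * (Real.sqrt (2 * π * t))⁻¹ *
            (Real.exp (-(x - y) ^ 2 / (2 * t)) - Real.exp (-(x + y) ^ 2 / (2 * t)))) *
          (y * Real.exp (c * y) / Real.sqrt (2 * π * (c ^ 2 / 2) ^ 2)))
      = Real.exp (-(c ^ 2 / 2) * t) *
          (x * Real.exp (c * x) / Real.sqrt (2 * π * (c ^ 2 / 2) ^ 2)) := by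
  set K : ℝ := Real.exp (c * x - c ^ 2 / 2 * t) / Real.sqrt (2 * π * (c ^ 2 / 2) ^ 2)
  have h_drift : ∀ y, Real.exp (-(c * (y - x)) - c ^ 2 / 2 * t) * Real.exp (c * y)
      = Real.exp (c * x - c ^ 2 / 2 * t) := by
    intro y
    rw [← Real.exp_add]
    ring_nf
  have h_integrand : ∀ y,
      (Real.exp (-(c * (y - x)) - c ^ 2 / 2 * t) * (Real.sqrt (2 * π * t))⁻¹ *
          (Real.exp (-(x - y) ^ 2 / (2 * t)) - Real.exp (-(x + y) ^ 2 / (2 * t)))) *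
        (y * Real.exp (c * y) / Real.sqrt (2 * π * (c ^ 2 / 2) ^ 2))
      = K * (y * (gaussianPDFReal x t.toNNReal y - gaussianPDFReal (-x) t.toNNReal y)) := by
    intro y
    simp only [K, gaussianPDFReal, Real.coe_toNNReal _ ht.le, ← h_drift y, sub_neg_eq_add]
    ring_nf
  simp_rw [h_integrand]
  rw [integral_const_mul, integral_Ioi_mul_sub_gaussianPDFReal_neg x (Real.toNNReal_pos.mpr ht).ne']
  simp only [K]
  rw [sub_eq_add_neg, Real.exp_add, ← neg_mul]
  ring

theorem h_is_right_eigenfunction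
    (c t x : ℝ) (hc : 0 < c) (ht : 0 < t) (hx : 0 < x) :
    (∫ y in Set.Ioi (0 : ℝ),
        (Real.exp (-(c * (y - x)) - c ^ 2 / 2 * t) * (Real.sqrt (2 * π * t))⁻¹ *
            (Real.exp (-(x - y) ^ 2 / (2 * t)) - Real.exp (-(x + y) ^ 2 / (2 * t)))) *
          (y * Real.exp (c * y) / Real.sqrt (2 * π * (c ^ 2 / 2) ^ 2)))
      = Real.exp (-(c ^ 2 / 2) * t) *
          (x * Real.exp (c * x) / Real.sqrt (2 * π * (c ^ 2 / 2) ^ 2)) :=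
  h_is_right_eigenfunction_general c t x ht
end

section
/- For every c > 0, every x > 0 and every Borel set B ⊆ (0,∞), with λ := c²/2, one has lim_{t→∞} t^{3/2} e^{λ t} ∫_B p_t(x,y) dy = h(x) ν(B), where h(x) := x e^{c x}/√(2π λ²) and ν is the measure on (0,∞) with density 2λ y e^{−c y} dy. In particular, ∫_B p_t(x,y) dy ∼ h(x) ν(B) t^{−3/2} e^{−λ t} as t → ∞ whenever ν(B) > 0. -/
/-!
Multiplied by `t ^ (3/2) * exp (λ t)`, the integrand becomes
`exp (-c (y - x)) / √(2π) * t (exp (-(x-y)²/2t) - exp (-(x+y)²/2t))`.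
The bracket `t (⋯)` tends to `2xy`, the derivative at `0` of
`s ↦ exp (-(x-y)² s/2) - exp (-(x+y)² s/2)`, and since `exp (-·)` is `1`-Lipschitz on
`[0, ∞)` it is bounded by `|2xy|` for all `t`. For `c > 0` the dominating function
`exp (-c (y - x)) |2xy|` is integrable on `(0, ∞)`, and dominated convergence gives the limit
`h(x) ν(B)`.
-/

open Real MeasureTheory Filter Set Topology

lemma tendsto_mul_exp_neg_div_sub_exp_neg_div (a b : ℝ) :
    Tendsto (fun t : ℝ => t * (exp (-a / t) - exp (-b / t))) atTop (𝓝 (b - a)) := by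
  have hderiv : HasDerivAt (fun s : ℝ => exp (-a * s) - exp (-b * s)) (b - a) 0 := by
    have hexp (k : ℝ) : HasDerivAt (fun s : ℝ => exp (k * s)) k 0 := by
      simpa using ((hasDerivAt_id (0 : ℝ)).const_mul k).exp
    exact ((hexp (-a)).sub (hexp (-b))).congr_deriv (by ring)
  refine (hderiv.tendsto_slope_zero_right.comp tendsto_inv_atTop_nhdsGT_zero).congr' ?_
  filter_upwards [eventually_ne_atTop 0] with t ht
  simp [div_eq_mul_inv]

lemma abs_exp_neg_sub_exp_neg_le {a b : ℝ} (ha : 0 ≤ a) (hb : 0 ≤ b) :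
    |exp (-a) - exp (-b)| ≤ |b - a| := by
  wlog hab : a ≤ b generalizing a b
  · rw [abs_sub_comm, abs_sub_comm b]
    exact this hb ha (le_of_not_ge hab)
  have hdecay : exp (-a) - exp (-b) = exp (-a) * (1 - exp (a - b)) := by
    rw [mul_sub, mul_one, ← exp_add]; ring_nf
  rw [abs_of_nonneg (sub_nonneg.2 (exp_le_exp.2 (neg_le_neg hab))),
    abs_of_nonneg (sub_nonneg.2 hab), hdecay]
  calc exp (-a) * (1 - exp (a - b)) ≤ 1 * (b - a) :=
        mul_le_mul (exp_le_one_iff.2 (by linarith)) (by linarith [add_one_le_exp (a - b)])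
          (sub_nonneg.2 (exp_le_one_iff.2 (by linarith))) zero_le_one
    _ = b - a := one_mul _

lemma integrableOn_Ioi_mul_exp_neg_mul {c : ℝ} (hc : 0 < c) :
    IntegrableOn (fun y : ℝ => y * exp (-(c * y))) (Ioi 0) := by
  simpa using integrableOn_rpow_mul_exp_neg_mul_rpow (s := 1) (p := 1) (b := c)
    (by norm_num) one_pos hc

noncomputable def absorbedTransitionDensity (c x t y : ℝ) : ℝ :=
  exp (-(c * (y - x)) - c ^ 2 / 2 * t) * (√(2 * π * t))⁻¹ *
    (exp (-(x - y) ^ 2 / (2 * t)) - exp (-(x + y) ^ 2 / (2 * t)))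

/-- `h(x)` times the density of `ν` at `y`, see `rescaledLimit_eq`. -/
noncomputable def rescaledLimit (c x y : ℝ) : ℝ :=
  exp (-(c * (y - x))) / √(2 * π) * (2 * x * y)

section
variable (c x y : ℝ) {t : ℝ}

lemma rescaledLimit_eq (hc : c ≠ 0) :
    rescaledLimit c x y =
      x * exp (c * x) / √(2 * π * (c ^ 2 / 2) ^ 2) * (2 * (c ^ 2 / 2) * y * exp (-(c * y))) := by
  rw [rescaledLimit, sqrt_mul (by positivity : (0 : ℝ) ≤ 2 * π), sqrt_sq (by positivity),
    show -(c * (y - x)) = c * x + -(c * y) by ring, exp_add]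
  field_simp

lemma rpow_three_halves_mul_exp_mul_absorbedTransitionDensity (ht : 0 < t) :
    t ^ (3 / 2 : ℝ) * exp (c ^ 2 / 2 * t) * absorbedTransitionDensity c x t y =
      exp (-(c * (y - x))) / √(2 * π) *
        (t * (exp (-((x - y) ^ 2 / 2) / t) - exp (-((x + y) ^ 2 / 2) / t))) := by
  have ht32 : t ^ (3 / 2 : ℝ) = t * √t := by
    rw [show (3 / 2 : ℝ) = 1 + 1 / 2 by norm_num, rpow_add ht, rpow_one, ← sqrt_eq_rpow]
  have hexponent (z : ℝ) : -z ^ 2 / (2 * t) = -(z ^ 2 / 2) / t := by ring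
  rw [absorbedTransitionDensity, ht32, sqrt_mul (by positivity), hexponent, hexponent]
  field_simp
  rw [← exp_add]; ring_nf

lemma tendsto_rpow_three_halves_mul_exp_mul_absorbedTransitionDensity :
    Tendsto (fun t => t ^ (3 / 2 : ℝ) * exp (c ^ 2 / 2 * t) * absorbedTransitionDensity c x t y)
      atTop (𝓝 (rescaledLimit c x y)) := by
  have hlim :=
    (tendsto_mul_exp_neg_div_sub_exp_neg_div ((x - y) ^ 2 / 2) ((x + y) ^ 2 / 2)).const_mul
      (exp (-(c * (y - x))) / √(2 * π))
  rw [show (x + y) ^ 2 / 2 - (x - y) ^ 2 / 2 = 2 * x * y by ring] at hlim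
  refine hlim.congr' ?_
  filter_upwards [eventually_gt_atTop 0] with t ht
  rw [rpow_three_halves_mul_exp_mul_absorbedTransitionDensity c x y ht]

lemma abs_rpow_three_halves_mul_exp_mul_absorbedTransitionDensity_le (ht : 0 < t) :
    |t ^ (3 / 2 : ℝ) * exp (c ^ 2 / 2 * t) * absorbedTransitionDensity c x t y| ≤
      |rescaledLimit c x y| := by
  rw [rpow_three_halves_mul_exp_mul_absorbedTransitionDensity c x y ht, rescaledLimit, abs_mul,
    abs_mul _ (2 * x * y), abs_of_nonneg (by positivity), abs_mul, abs_of_pos ht]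
  gcongr
  calc t * |exp (-((x - y) ^ 2 / 2) / t) - exp (-((x + y) ^ 2 / 2) / t)|
      ≤ t * |(x + y) ^ 2 / 2 / t - (x - y) ^ 2 / 2 / t| := by
        rw [neg_div, neg_div]
        exact mul_le_mul_of_nonneg_left (abs_exp_neg_sub_exp_neg_le (by positivity) (by positivity))
          ht.le
    _ = |2 * x * y| := by
        rw [← sub_div, abs_div, abs_of_pos ht, mul_div_cancel₀ _ ht.ne']
        congr 1; ring

end

lemma integrableOn_rescaledLimit {c : ℝ} (hc : 0 < c) (x : ℝ) {B : Set ℝ} (hB : B ⊆ Ioi 0) :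
    IntegrableOn (rescaledLimit c x) B := by
  have hν : IntegrableOn (fun y => 2 * (c ^ 2 / 2) * y * exp (-(c * y))) B := by
    simp_rw [mul_assoc _ _ (exp _)]
    exact ((integrableOn_Ioi_mul_exp_neg_mul hc).mono_set hB).const_mul _
  rw [funext (rescaledLimit_eq c x · hc.ne')]
  exact hν.const_mul _

theorem transition_density_asymptotics_general
    (c x : ℝ) (hc : 0 < c)
    (B : Set ℝ) (hB0 : B ⊆ Set.Ioi (0 : ℝ)) :
    Tendsto
      (fun t : ℝ =>
        t ^ (3 / 2 : ℝ) * Real.exp (c ^ 2 / 2 * t) *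
          ∫ y in B,
            Real.exp (-(c * (y - x)) - c ^ 2 / 2 * t) * (Real.sqrt (2 * π * t))⁻¹ *
              (Real.exp (-(x - y) ^ 2 / (2 * t)) - Real.exp (-(x + y) ^ 2 / (2 * t))))
      atTop
      (nhds ((x * Real.exp (c * x) / Real.sqrt (2 * π * (c ^ 2 / 2) ^ 2)) *
        ∫ y in B, 2 * (c ^ 2 / 2) * y * Real.exp (-(c * y)))) := by
  rw [← integral_const_mul]
  simp_rw [← rescaledLimit_eq c x _ hc.ne', ← integral_const_mul]
  refine tendsto_integral_filter_of_dominated_convergence _ ?_ ?_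
    (integrableOn_rescaledLimit hc x hB0).abs ?_
  · exact .of_forall fun t => (by fun_prop : Continuous _).aestronglyMeasurable
  · filter_upwards [eventually_gt_atTop 0] with t ht
    exact .of_forall fun y =>
      abs_rpow_three_halves_mul_exp_mul_absorbedTransitionDensity_le c x y ht
  · exact .of_forall fun y => tendsto_rpow_three_halves_mul_exp_mul_absorbedTransitionDensity c x y

theorem transition_density_asymptotics
    (c x : ℝ) (hc : 0 < c) (hx : 0 < x)
    (B : Set ℝ) (hB : MeasurableSet B) (hB0 : B ⊆ Set.Ioi (0 : ℝ)) :
    Tendsto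
      (fun t : ℝ =>
        t ^ (3 / 2 : ℝ) * Real.exp (c ^ 2 / 2 * t) *
          ∫ y in B,
            Real.exp (-(c * (y - x)) - c ^ 2 / 2 * t) * (Real.sqrt (2 * π * t))⁻¹ *
              (Real.exp (-(x - y) ^ 2 / (2 * t)) - Real.exp (-(x + y) ^ 2 / (2 * t))))
      atTop
      (nhds ((x * Real.exp (c * x) / Real.sqrt (2 * π * (c ^ 2 / 2) ^ 2)) *
        ∫ y in B, 2 * (c ^ 2 / 2) * y * Real.exp (-(c * y)))) :=
  transition_density_asymptotics_general c x hc B hB0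
end

section
/- For every c > 0 and x > 0 there exist constants C₁, C₂, M₀ > 0, depending only on x and c, such that for every M ≥ M₀ and every integer k ≥ 0, setting a_k := M(1 + k^{3/4}) + c k − x and λ := c²/2, the Gaussian tail satisfies 2 ∫_{a_k}^∞ (2π (k+1))^{−1/2} e^{−u²/(2(k+1))} du ≤ ( C₁ / h( M (1 + (k+1)^{3/4}) ) ) · e^{ −C₂ M² (1 + √k) − λ (k+1) }, where h(y) := y e^{c y}/√(2π λ²). -/
/-!
Write `k = r⁴`. Then `a_k = M(1 + r³) + c r⁴ - x`, and by subadditivity of `t ↦ t ^ (3/4)` the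
level `y = M(1 + (k + 1) ^ (3/4))` is at most `M(2 + r³)`. The Mills-ratio bound
`∫_a^∞ e^{-u²/2s} du ≤ (s/a) e^{-a²/2s}` leaves only the exponent to control: for
`M ≥ 2x + 64c + 8`, expanding `a_k²` shows that `a_k² / 2(k+1)` exceeds
`c y + λ(k + 1) + M²(1 + √k)/32 - cx - c²`, and half of the `M²` term absorbs the polynomial
prefactor `√(k + 1) · y / a_k`.
-/

open Real MeasureTheory Set

theorem integral_Ioi_exp_neg_sq_div_le {s a : ℝ} (hs : 0 < s) (ha : 0 < a) :
    ∫ u in Ioi a, exp (-u ^ 2 / (2 * s)) ≤ s / a * exp (-a ^ 2 / (2 * s)) := by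
  have hb : -(a / s) < 0 := by simp only [neg_lt_zero]; positivity
  calc ∫ u in Ioi a, exp (-u ^ 2 / (2 * s))
      ≤ ∫ u in Ioi a, exp (a ^ 2 / (2 * s)) * exp (-(a / s) * u) := by
        refine setIntegral_mono_on ?_ ((integrableOn_exp_mul_Ioi hb a).const_mul _)
          measurableSet_Ioi fun u _ ↦ ?_
        · exact (integrable_exp_neg_mul_sq (b := 1 / (2 * s)) (by positivity)).integrableOn
            |>.congr_fun (fun u _ ↦ by ring_nf) measurableSet_Ioi
        · have hsq : a ^ 2 / (2 * s) + -(a / s) * u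
              = -u ^ 2 / (2 * s) + (u - a) ^ 2 / (2 * s) := by
            field_simp; ring
          rw [← exp_add, exp_le_exp, hsq, le_add_iff_nonneg_right]
          positivity
    _ = s / a * exp (-a ^ 2 / (2 * s)) := by
        rw [integral_const_mul, integral_exp_mul_Ioi hb a, neg_div_neg_eq, mul_div_assoc',
          ← exp_add]
        field_simp
        ring_nf

theorem integral_Ioi_gaussian_density_le {s a : ℝ} (hs : 0 < s) (ha : 0 < a) :
    ∫ u in Ioi a, (√(2 * π * s))⁻¹ * exp (-u ^ 2 / (2 * s))
      ≤ √s / (√(2 * π) * a) * exp (-a ^ 2 / (2 * s)) := by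
  calc ∫ u in Ioi a, (√(2 * π * s))⁻¹ * exp (-u ^ 2 / (2 * s))
      = (√(2 * π * s))⁻¹ * ∫ u in Ioi a, exp (-u ^ 2 / (2 * s)) := integral_const_mul _ _
    _ ≤ (√(2 * π * s))⁻¹ * (s / a * exp (-a ^ 2 / (2 * s))) := by
        gcongr; exact integral_Ioi_exp_neg_sq_div_le hs ha
    _ = √s / (√(2 * π) * a) * exp (-a ^ 2 / (2 * s)) := by
        rw [sqrt_mul (by positivity), ← mul_assoc]
        congr 1
        field_simp
        rw [sq_sqrt hs.le]

theorem exit_exponent_le {c x M r y : ℝ} (hc : 0 ≤ c) (hx : 0 ≤ x) (hr : 0 ≤ r) (hxM : 2 * x ≤ M)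
    (hcM : 48 * c ≤ M) (hy : y ≤ M * (2 + r ^ 3)) :
    c * y + c ^ 2 / 2 * (r ^ 4 + 1) + M ^ 2 * (1 + r ^ 2) / 32 - c * x - c ^ 2
      ≤ (M * (1 + r ^ 3) + c * r ^ 4 - x) ^ 2 / (2 * (r ^ 4 + 1)) := by
  have hM : 0 ≤ M := by linarith
  have hr3 : 0 ≤ r ^ 3 := by positivity
  have hb : (M * (1 + r ^ 3) / 2) ^ 2 ≤ (M * (1 + r ^ 3) - x) ^ 2 := by
    have : 0 ≤ M * (1 + r ^ 3) / 2 := by positivity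
    gcongr
    nlinarith
  have h1 : (1 + r ^ 2) * (1 + r ^ 4) ≤ 2 * (1 + r ^ 3) ^ 2 := by
    nlinarith [sq_nonneg (r - 1), mul_nonneg hr3 (sq_nonneg (r - 1)), pow_nonneg hr 4]
  have h2 : r ^ 4 + r ^ 3 + 2 ≤ 3 * (1 + r ^ 3) ^ 2 := by
    nlinarith [sq_nonneg (r - 1), mul_nonneg hr3 (sq_nonneg (r - 1)), sq_nonneg (r ^ 3 - r ^ 2)]
  rw [le_div_iff₀ (by positivity)]
  -- with `y = M(2 + r³)`, `s = r⁴ + 1` and `a` the right-hand numerator, expanding gives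
  -- `a² - c²s² - 2scy + 2scx + 2sc² = (M(1 + r³) - x)² - 2cM(r⁴ + r³ + 2) + 2cx + c²`
  nlinarith [mul_le_mul_of_nonneg_left h1 (sq_nonneg M),
    mul_le_mul_of_nonneg_left h2 (mul_nonneg hc hM),
    mul_le_mul_of_nonneg_left hy (by positivity : 0 ≤ c * (r ^ 4 + 1)),
    mul_nonneg (mul_nonneg hM (sub_nonneg.2 hcM)) (sq_nonneg (1 + r ^ 3)), mul_nonneg hc hx]

theorem gaussian_tail_bound_quartic {c x M r y : ℝ} (hc : 0 < c) (hx : 0 ≤ x) (hr : 0 ≤ r)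
    (hM : 2 * x + 64 * c + 8 ≤ M) (hy₀ : 0 < y) (hy : y ≤ M * (2 + r ^ 3)) :
    2 * ∫ u in Ioi (M * (1 + r ^ 3) + c * r ^ 4 - x),
        (√(2 * π * (r ^ 4 + 1)))⁻¹ * exp (-u ^ 2 / (2 * (r ^ 4 + 1)))
      ≤ 8 * exp (c * x + c ^ 2) / (√(2 * π) * √(2 * π * (c ^ 2 / 2) ^ 2)) /
          (y * exp (c * y) / √(2 * π * (c ^ 2 / 2) ^ 2)) *
        exp (-(1 / 64) * M ^ 2 * (1 + r ^ 2) - c ^ 2 / 2 * (r ^ 4 + 1)) := by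
  have hM₀ : 0 < M := by linarith
  have hexp := exit_exponent_le hc.le hx hr (by linarith) (by linarith) hy
  set s := r ^ 4 + 1
  set a := M * (1 + r ^ 3) + c * r ^ 4 - x
  set L := M ^ 2 * (1 + r ^ 2) / 64 with hL
  have hs : 0 < s := by positivity
  have ha : M * (1 + r ^ 3) / 2 ≤ a := by nlinarith [pow_nonneg hr 3, pow_nonneg hr 4]
  have ha₀ : 0 < a := lt_of_lt_of_le (by positivity) ha
  have hya : y ≤ 4 * a := by nlinarith [pow_nonneg hr 3]
  have hsL : √s * exp (-L) ≤ 1 := by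
    have : 1 + r ^ 2 ≤ L := by
      have : (64 : ℝ) ≤ M ^ 2 := by nlinarith
      nlinarith [mul_le_mul_of_nonneg_right this (by positivity : (0 : ℝ) ≤ 1 + r ^ 2)]
    rw [exp_neg, mul_inv_le_iff₀ (exp_pos L), one_mul, sqrt_le_left (exp_pos L).le]
    calc s ≤ (1 + r ^ 2) ^ 2 := by nlinarith [pow_nonneg hr 2]
      _ ≤ exp L ^ 2 := pow_le_pow_left₀ (by positivity) (by linarith [add_one_le_exp L]) 2
  calc 2 * ∫ u in Ioi a, (√(2 * π * s))⁻¹ * exp (-u ^ 2 / (2 * s))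
      ≤ 2 * (√s / (√(2 * π) * a) * exp (-a ^ 2 / (2 * s))) := by
        gcongr; exact integral_Ioi_gaussian_density_le hs ha₀
    _ ≤ 2 * (√s / (√(2 * π) * a) * (exp (c * x + c ^ 2) * exp (-(c * y)) *
          exp (-L - c ^ 2 / 2 * s) * exp (-L))) := by
        simp only [← exp_add]; gcongr; rw [neg_div]; linarith [hL]
    _ = 2 * (√s * exp (-L)) / (√(2 * π) * a) * exp (c * x + c ^ 2) * exp (-(c * y)) *
          exp (-L - c ^ 2 / 2 * s) := by ring
    _ ≤ 2 * 1 / (√(2 * π) * (y / 4)) * exp (c * x + c ^ 2) * exp (-(c * y)) *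
          exp (-L - c ^ 2 / 2 * s) := by gcongr; linarith
    _ = _ := by
        rw [exp_neg (c * y), show -(1 / 64) * M ^ 2 * (1 + r ^ 2) = -L by ring]
        field_simp
        ring

theorem gaussian_tail_bound_exit_probability
    (c x : ℝ) (hc : 0 < c) (hx : 0 < x) :
    ∃ C₁ C₂ M₀ : ℝ, 0 < C₁ ∧ 0 < C₂ ∧ 0 < M₀ ∧
      ∀ M : ℝ, M₀ ≤ M → ∀ k : ℕ,
        2 * ∫ u in Set.Ioi (M * (1 + (k : ℝ) ^ (3 / 4 : ℝ)) + c * k - x),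
              (Real.sqrt (2 * π * ((k : ℝ) + 1)))⁻¹ * Real.exp (-u ^ 2 / (2 * ((k : ℝ) + 1)))
          ≤ (C₁ /
              (M * (1 + ((k : ℝ) + 1) ^ (3 / 4 : ℝ)) *
                  Real.exp (c * (M * (1 + ((k : ℝ) + 1) ^ (3 / 4 : ℝ)))) /
                Real.sqrt (2 * π * (c ^ 2 / 2) ^ 2))) *
            Real.exp (-C₂ * M ^ 2 * (1 + Real.sqrt k) - c ^ 2 / 2 * ((k : ℝ) + 1)) := by
  refine ⟨8 * exp (c * x + c ^ 2) / (√(2 * π) * √(2 * π * (c ^ 2 / 2) ^ 2)), 1 / 64,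
    2 * x + 64 * c + 8, by positivity, by norm_num, by positivity, fun M hM k ↦ ?_⟩
  have hM₀ : 0 < M := by linarith
  have hk : (0 : ℝ) ≤ k := k.cast_nonneg
  set r := (k : ℝ) ^ (1 / 4 : ℝ)
  have hpow (n : ℕ) : r ^ n = (k : ℝ) ^ ((n : ℝ) / 4) := by
    rw [← rpow_natCast, ← rpow_mul hk]; ring_nf
  have hr4 : r ^ 4 = k := by rw [hpow]; norm_num
  have hr3 : r ^ 3 = (k : ℝ) ^ (3 / 4 : ℝ) := by rw [hpow]; norm_num
  have hr2 : r ^ 2 = √(k : ℝ) := by rw [hpow, sqrt_eq_rpow]; norm_num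
  have hy : M * (1 + ((k : ℝ) + 1) ^ (3 / 4 : ℝ)) ≤ M * (2 + r ^ 3) := by
    have := rpow_add_le_add_rpow hk zero_le_one (by norm_num : (0 : ℝ) ≤ 3 / 4) (by norm_num)
    rw [one_rpow, ← hr3] at this
    exact mul_le_mul_of_nonneg_left (by linarith) hM₀.le
  have := gaussian_tail_bound_quartic hc hx.le (rpow_nonneg hk _) (by linarith) (by positivity) hy
  rwa [hr4, hr3, hr2] at this
end
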